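/- arXiv:1610.09770 — 12 statements merged into one kernel-verified Lean document; each statement's English description precedes it below -/
import Mathlib

section
/- In any semigroup, a subset A is piecewise syndetic if and only if it can be written as the intersection of a (right) syndetic set and a (left) thick set. -/
open Pointwise

/-- A is right syndetic: finitely many left translates s⁻¹A cover S. -/
def RSyndetic {S : Type*} [Semigroup S] (A : Set S) : Prop :=
  ∃ F : Finset S, ∀ x : S, ∃ s ∈ F, s * x ∈ A

/-- A is left thick: every finite set has a right translate inside A. -/
def LThick {S : Type*} [Semigroup S] (A : Set S) : Prop :=
  ∀ F : Finset S, ∃ x : S, ∀ f ∈ F, f * x ∈ A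

/-- A is right piecewise syndetic: some finite union of translates s⁻¹A is left thick. -/
def RPiecewiseSyndetic {S : Type*} [Semigroup S] (A : Set S) : Prop :=
  ∃ F : Finset S, LThick {x : S | ∃ s ∈ F, s * x ∈ A}

/-- In any semigroup, A is piecewise syndetic iff A is the intersection of a
syndetic set and a thick set. -/
theorem piecewiseSyndetic_iff_inter_syndetic_thick {S : Type*} [Semigroup S] (A : Set S) :
    RPiecewiseSyndetic A ↔ ∃ C B : Set S, RSyndetic C ∧ LThick B ∧ A = C ∩ B := by
  classical
  constructor
  · rintro ⟨F, hT⟩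
    set T : Set S := {x : S | ∃ s ∈ F, s * x ∈ A} with hTdef
    choose y hyspec using hT
    set B : Set S := A ∪ {z | ∃ H : Finset S, ∃ h ∈ H, z = h * y H} with hB
    have hAB : A ⊆ B := Set.subset_union_left
    have hBthick : LThick B := fun H => ⟨y H, fun h hh => Or.inr ⟨H, h, hh, rfl⟩⟩
    have hFne : ∃ s, s ∈ F := by
      obtain ⟨x, -⟩ := hBthick ∅
      obtain ⟨s, hs, -⟩ := hyspec {x} x (Finset.mem_singleton_self x)
      exact ⟨s, hs⟩
    refine ⟨A ∪ Bᶜ, B, ⟨F ∪ F * F, fun x => ?_⟩, hBthick, ?_⟩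
    · by_cases hx : x ∈ T
      · obtain ⟨s, hs, hsx⟩ := hx
        exact ⟨s, Finset.mem_union_left _ hs, Or.inl hsx⟩
      · by_cases hb : ∃ s ∈ F, s * x ∉ B
        · obtain ⟨s, hs, hsx⟩ := hb
          exact ⟨s, Finset.mem_union_left _ hs, Or.inr hsx⟩
        · push_neg at hb
          obtain ⟨s, hs⟩ := hFne
          rcases hb s hs with hA | ⟨H, h, hh, heq⟩
          · exact absurd ⟨s, hs, hA⟩ hx
          · have hmem : s * x ∈ T := heq ▸ hyspec H h hh
            obtain ⟨s', hs', hs'x⟩ := hmem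
            refine ⟨s' * s, Finset.mem_union_right _ (Finset.mul_mem_mul hs' hs), Or.inl ?_⟩
            rwa [mul_assoc]
    · apply Set.Subset.antisymm
      · exact fun a ha => ⟨Or.inl ha, hAB ha⟩
      · rintro a ⟨hC | hC, hB'⟩
        · exact hC
        · exact absurd hB' hC
  · rintro ⟨C, B, ⟨G, hG⟩, hB, rfl⟩
    refine ⟨G, fun H => ?_⟩
    obtain ⟨x, hx⟩ := hB (G * H)
    refine ⟨x, fun h hh => ?_⟩
    obtain ⟨s, hs, hsC⟩ := hG (h * x)
    refine ⟨s, hs, hsC, ?_⟩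
    have := hx (s * h) (Finset.mul_mem_mul hs hh)
    rwa [mul_assoc] at this
end

section
/- In any semigroup, a subset A is PS* (has nonempty intersection with every piecewise syndetic set) if and only if for every finite set F ⊆ S there exists a syndetic set C ⊆ S such that F·C ⊆ A. -/
/-- A is PS*: A meets every piecewise syndetic set. -/
def PSStar {S : Type*} [Semigroup S] (A : Set S) : Prop :=
  ∀ B : Set S, RPiecewiseSyndetic B → (A ∩ B).Nonempty

/-- A is PS* iff for every finite F there is a syndetic C with F·C ⊆ A. -/
theorem psstar_iff_forall_finset_exists_syndetic {S : Type*} [Semigroup S] (A : Set S) :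
    PSStar A ↔ ∀ F : Finset S, ∃ C : Set S, RSyndetic C ∧ ∀ f ∈ F, ∀ c ∈ C, f * c ∈ A := by
  constructor
  · intro h F
    refine ⟨{x | ∀ f ∈ F, f * x ∈ A}, ?_, fun f hf c hc => hc f hf⟩
    by_contra hns
    have hthick : LThick {x : S | ∃ s ∈ F, s * x ∈ Aᶜ} := by
      intro G
      unfold RSyndetic at hns
      push_neg at hns
      obtain ⟨x, hx⟩ := hns G
      refine ⟨x, fun g hg => ?_⟩
      have h2 := hx g hg
      simp only [Set.mem_setOf_eq] at h2
      push_neg at h2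
      obtain ⟨f, hf, hfa⟩ := h2
      exact ⟨f, hf, hfa⟩
    obtain ⟨x, hxA, hxA'⟩ := h Aᶜ ⟨F, hthick⟩
    exact hxA' hxA
  · rintro h B ⟨F, hT⟩
    obtain ⟨C, ⟨G, hG⟩, hFC⟩ := h F
    obtain ⟨x, hx⟩ := hT G
    obtain ⟨g, hg, hgc⟩ := hG x
    obtain ⟨s, hs, hsb⟩ := hx g hg
    exact ⟨s * (g * x), hFC s hs (g * x) hgc, hsb⟩
end

section
/- In any semigroup, if A is piecewise syndetic and P is PS*, then A ∩ P is piecewise syndetic. -/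
theorem rps_mono {S : Type*} [Semigroup S] {B D : Set S} (hBD : B ⊆ D)
    (hB : RPiecewiseSyndetic B) : RPiecewiseSyndetic D := by
  obtain ⟨F, hF⟩ := hB
  refine ⟨F, fun E => ?_⟩
  obtain ⟨x, hx⟩ := hF E
  exact ⟨x, fun f hf => by obtain ⟨s, hs, hsx⟩ := hx f hf; exact ⟨s, hs, hBD hsx⟩⟩

/-- Partition regularity (two sets) of piecewise syndeticity. -/
theorem rps_union {S : Type*} [Semigroup S] {B C : Set S}
    (h : RPiecewiseSyndetic (B ∪ C)) (hC : ¬ RPiecewiseSyndetic C) :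
    RPiecewiseSyndetic B := by
  classical
  obtain ⟨G, hG⟩ := h
  -- C is not PS: in particular the G-translate union of C is not thick
  have hCG : ¬ LThick {x : S | ∃ s ∈ G, s * x ∈ C} := fun h' => hC ⟨G, h'⟩
  simp only [LThick, not_forall, not_exists] at hCG
  obtain ⟨E, hE⟩ := hCG
  -- hE : ∀ x, ¬ ∀ f ∈ E, f * x ∈ {x | ∃ s ∈ G, s * x ∈ C}
  have hE' : ∀ y : S, ∃ e ∈ E, ∀ t ∈ G, ¬ t * (e * y) ∈ C := by
    intro y
    have := hE y
    obtain ⟨e, he, hne⟩ := this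
    refine ⟨e, he, fun t ht htc => hne ⟨t, ht, htc⟩⟩
  refine ⟨(G ×ˢ E).image (fun p => p.1 * p.2), fun F => ?_⟩
  obtain ⟨x, hx⟩ := hG ((E ×ˢ F).image (fun p => p.1 * p.2))
  refine ⟨x, fun f hf => ?_⟩
  obtain ⟨e, he, heC⟩ := hE' (f * x)
  have hmem : e * f ∈ (E ×ˢ F).image (fun p => p.1 * p.2) :=
    Finset.mem_image.mpr ⟨(e, f), Finset.mem_product.mpr ⟨he, hf⟩, rfl⟩
  obtain ⟨t, ht, htBC⟩ := hx (e * f) hmem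
  have hassoc : t * (e * f * x) = t * e * (f * x) := by
    simp [mul_assoc]
  refine ⟨t * e, Finset.mem_image.mpr ⟨(t, e), Finset.mem_product.mpr ⟨ht, he⟩, rfl⟩, ?_⟩
  rw [← hassoc]
  rcases htBC with hB | hCmem
  · exact hB
  · exact absurd (by simpa [mul_assoc] using hCmem) (heC t ht)

/-- If A is piecewise syndetic and P is PS*, then A ∩ P is piecewise syndetic. -/
theorem piecewiseSyndetic_inter_psstar {S : Type*} [Semigroup S] (A P : Set S)
    (hA : RPiecewiseSyndetic A) (hP : PSStar P) : RPiecewiseSyndetic (A ∩ P) := by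
  by_contra hAP
  have hsplit : A ⊆ (A \ P) ∪ (A ∩ P) := by
    intro a ha
    by_cases h : a ∈ P
    · exact Or.inr ⟨ha, h⟩
    · exact Or.inl ⟨ha, h⟩
  have hBPS : RPiecewiseSyndetic (A \ P) :=
    rps_union (rps_mono hsplit hA) hAP
  have hPc : RPiecewiseSyndetic Pᶜ :=
    rps_mono (fun a ha => ha.2) hBPS
  obtain ⟨x, hx, hx'⟩ := hP Pᶜ hPc
  exact hx' hx
end

section
/- In a cancellative semigroup, a subset A is left thick if and only if its density d*_S(A) equals 1, where d*_S(A) = sup{α ≥ 0 | for all finite F ⊆ S, there exists s ∈ S with |(F·s) ∩ A| ≥ α|F|}. -/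
/-- The density d*_S(A) = sup{α ≥ 0 | ∀ finite F ⊆ S, ∃ s ∈ S, |(F·s) ∩ A| ≥ α|F|}. -/
noncomputable def dens {S : Type*} [Semigroup S] (A : Set S) : ℝ :=
  sSup {α : ℝ | 0 ≤ α ∧ ∀ F : Finset S, ∃ s : S,
    α * (F.card : ℝ) ≤ ((((fun f => f * s) '' (F : Set S)) ∩ A).ncard : ℝ)}

/-- In a cancellative semigroup, A is left thick iff d*_S(A) = 1. -/
theorem lthick_iff_dens_eq_one {S : Type*} [Semigroup S] [IsCancelMul S] (A : Set S) :
    LThick A ↔ dens A = 1 := by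
  set D : Set ℝ := {α : ℝ | 0 ≤ α ∧ ∀ F : Finset S, ∃ s : S,
    α * (F.card : ℝ) ≤ ((((fun f => f * s) '' (F : Set S)) ∩ A).ncard : ℝ)} with hD
  have hdens : dens A = sSup D := rfl
  have himg : ∀ (F : Finset S) (s : S), ((fun f => f * s) '' (F : Set S)).ncard = F.card := by
    intro F s
    rw [Set.ncard_image_of_injective _ (mul_left_injective s), Set.ncard_coe_finset]
  have hle : ∀ (F : Finset S) (s : S),
      (((fun f => f * s) '' (F : Set S)) ∩ A).ncard ≤ F.card := by
    intro F s
    calc (((fun f => f * s) '' (F : Set S)) ∩ A).ncard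
        ≤ ((fun f => f * s) '' (F : Set S)).ncard :=
          Set.ncard_le_ncard Set.inter_subset_left ((F : Set S).toFinite.image _)
      _ = F.card := himg F s
  have hbdd : Nonempty S → ∀ α ∈ D, α ≤ 1 := by
    rintro ⟨s₀⟩ α ⟨hα0, hα⟩
    obtain ⟨s, hs⟩ := hα {s₀}
    have h1 := hle {s₀} s
    have h2 : ((({s₀} : Finset S).card : ℝ)) = 1 := by simp
    rw [h2, mul_one] at hs
    have : ((((fun f => f * s) '' (({s₀} : Finset S) : Set S)) ∩ A).ncard : ℝ) ≤ 1 := by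
      exact_mod_cast (by simpa using h1 : (((fun f => f * s) '' (({s₀} : Finset S) : Set S)) ∩ A).ncard ≤ 1)
    linarith
  constructor
  · intro hT
    have hSne : Nonempty S := (hT ∅).elim fun x _ => ⟨x⟩
    have h1 : (1 : ℝ) ∈ D := by
      refine ⟨zero_le_one, fun F => ?_⟩
      obtain ⟨x, hx⟩ := hT F
      refine ⟨x, ?_⟩
      have heq : ((fun f => f * x) '' (F : Set S)) ∩ A = (fun f => f * x) '' (F : Set S) := by
        apply Set.inter_eq_self_of_subset_left
        rintro _ ⟨f, hf, rfl⟩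
        exact hx f hf
      rw [heq, himg, one_mul]
    rw [hdens]
    exact le_antisymm (Real.sSup_le (hbdd hSne) zero_le_one) (le_csSup ⟨1, hbdd hSne⟩ h1)
  · intro hd F
    rw [hdens] at hd
    have hDne : D.Nonempty := by
      by_contra h
      rw [Set.not_nonempty_iff_eq_empty] at h
      rw [h, Real.sSup_empty] at hd
      norm_num at hd
    have hSne : Nonempty S := by
      obtain ⟨α, _, hα⟩ := hDne
      obtain ⟨s, _⟩ := hα ∅
      exact ⟨s⟩
    rcases eq_or_ne F ∅ with hF | hF
    · obtain ⟨x⟩ := hSne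
      exact ⟨x, by simp [hF]⟩
    · have hcard : 0 < F.card := Finset.card_pos.mpr (Finset.nonempty_iff_ne_empty.mpr hF)
      have hcardR : (0 : ℝ) < F.card := by exact_mod_cast hcard
      have hlt : (1 : ℝ) - 1 / F.card < sSup D := by
        rw [hd]
        have : (0 : ℝ) < 1 / F.card := by positivity
        linarith
      obtain ⟨α, hαD, hα⟩ := exists_lt_of_lt_csSup hDne hlt
      obtain ⟨s, hs⟩ := hαD.2 F
      have h1 : (F.card : ℝ) - 1 < ((((fun f => f * s) '' (F : Set S)) ∩ A).ncard : ℝ) := by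
        calc (F.card : ℝ) - 1 = (1 - 1 / F.card) * F.card := by field_simp
          _ < α * F.card := by exact mul_lt_mul_of_pos_right hα hcardR
          _ ≤ _ := hs
      have h2 : F.card ≤ (((fun f => f * s) '' (F : Set S)) ∩ A).ncard := by
        have : (F.card : ℝ) < ((((fun f => f * s) '' (F : Set S)) ∩ A).ncard : ℝ) + 1 := by
          linarith
        exact_mod_cast Nat.lt_succ_iff.mp (by exact_mod_cast this)
      have heq : ((fun f => f * s) '' (F : Set S)) ∩ A = (fun f => f * s) '' (F : Set S) := by
        exact Set.eq_of_subset_of_ncard_le Set.inter_subset_left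
          (by rw [himg]; exact h2) ((F : Set S).toFinite.image _)
      refine ⟨s, fun f hf => ?_⟩
      have hmem : f * s ∈ ((fun f => f * s) '' (F : Set S)) ∩ A := by
        rw [heq]
        exact ⟨f, hf, rfl⟩
      exact hmem.2
end

section
/- Let ∗ make ℚ^d into an associative division algebra with left representation ψ and right representation ψ_r. The centralizer of ψ(ℚ^d) in M_d(ℚ) equals ψ_r(ℚ^d). -/
structure QDivMul (d : ℕ) where
  mul : (Fin d → ℚ) → (Fin d → ℚ) → (Fin d → ℚ)
  add_left : ∀ x y z, mul (x + y) z = mul x z + mul y z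
  add_right : ∀ x y z, mul x (y + z) = mul x y + mul x z
  smul_left : ∀ (q : ℚ) (x z), mul (q • x) z = q • mul x z
  smul_right : ∀ (q : ℚ) (x z), mul x (q • z) = q • mul x z
  assoc : ∀ x y z, mul (mul x y) z = mul x (mul y z)
  no_zero_divisors : ∀ x y, mul x y = 0 → x = 0 ∨ y = 0

def IsIntVec {d : ℕ} (x : Fin d → ℚ) : Prop := ∀ i, ∃ n : ℤ, x i = (n : ℚ)

def psiL {d : ℕ} (M : QDivMul d) (x : Fin d → ℚ) : Matrix (Fin d) (Fin d) ℚ :=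
  Matrix.of fun i j => M.mul x (Pi.single j 1) i

def psiR {d : ℕ} (M : QDivMul d) (x : Fin d → ℚ) : Matrix (Fin d) (Fin d) ℚ :=
  Matrix.of fun i j => M.mul (Pi.single j 1) x i

open Matrix
/-- Left multiplication as a linear map. -/
def Lmap {d : ℕ} (M : QDivMul d) (x : Fin d → ℚ) : (Fin d → ℚ) →ₗ[ℚ] (Fin d → ℚ) where
  toFun := M.mul x
  map_add' := M.add_right x
  map_smul' := fun q v => M.smul_right q x v

/-- Right multiplication as a linear map. -/
def Rmap {d : ℕ} (M : QDivMul d) (u : Fin d → ℚ) : (Fin d → ℚ) →ₗ[ℚ] (Fin d → ℚ) where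
  toFun := fun v => M.mul v u
  map_add' := fun a b => M.add_left a b u
  map_smul' := fun q v => M.smul_left q v u

lemma single_eq_ite {d : ℕ} (j : Fin d) :
    (Pi.single j (1:ℚ)) = fun i => if j = i then (1:ℚ) else 0 := by
  funext i
  simp [Pi.single_apply, eq_comm]

lemma psiL_mulVec {d : ℕ} (M : QDivMul d) (x v : Fin d → ℚ) :
    psiL M x *ᵥ v = M.mul x v := by
  funext i
  rw [show M.mul x v = Lmap M x v from rfl, LinearMap.pi_apply_eq_sum_univ]
  simp only [Matrix.mulVec, dotProduct, psiL, Matrix.of_apply, Finset.sum_apply,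
    Pi.smul_apply, smul_eq_mul]
  refine Finset.sum_congr rfl fun j _ => ?_
  rw [show (Lmap M x fun k => if j = k then (1:ℚ) else 0) = M.mul x (Pi.single j 1) by
    rw [single_eq_ite]; rfl]
  ring

lemma psiR_mulVec {d : ℕ} (M : QDivMul d) (u v : Fin d → ℚ) :
    psiR M u *ᵥ v = M.mul v u := by
  funext i
  rw [show M.mul v u = Rmap M u v from rfl, LinearMap.pi_apply_eq_sum_univ]
  simp only [Matrix.mulVec, dotProduct, psiR, Matrix.of_apply, Finset.sum_apply,
    Pi.smul_apply, smul_eq_mul]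
  refine Finset.sum_congr rfl fun j _ => ?_
  rw [show (Rmap M u fun k => if j = k then (1:ℚ) else 0) = M.mul (Pi.single j 1) u by
    rw [single_eq_ite]; rfl]
  ring

lemma matrix_ext_of_mulVec {d : ℕ} {A B : Matrix (Fin d) (Fin d) ℚ}
    (h : ∀ v, A *ᵥ v = B *ᵥ v) : A = B := by
  ext i j
  have := congrFun (h (Pi.single j 1)) i
  simpa using this

/-- Existence of a two-sided identity when d > 0. -/
lemma exists_id {d : ℕ} (M : QDivMul d) (hd : 0 < d) :
    ∃ e : Fin d → ℚ, (∀ y, M.mul e y = y) ∧ (∀ y, M.mul y e = y) := by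
  have i0 : Fin d := ⟨0, hd⟩
  set x : Fin d → ℚ := Pi.single i0 1 with hx
  have hx0 : x ≠ 0 := by
    intro h
    have := congrFun h i0
    simp [hx] at this
  have hLinj : Function.Injective (Lmap M x) := by
    rw [injective_iff_map_eq_zero (Lmap M x)]
    intro a ha
    rcases M.no_zero_divisors x a ha with h | h
    · exact absurd h hx0
    · exact h
  have hLsurj : Function.Surjective (Lmap M x) :=
    (LinearMap.injective_iff_surjective).mp hLinj
  obtain ⟨e, he⟩ := hLsurj x
  have he' : M.mul x e = x := he
  have left_id : ∀ y, M.mul e y = y := by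
    intro y
    apply hLinj
    show M.mul x (M.mul e y) = M.mul x y
    rw [← M.assoc, he']
  have right_id : ∀ y, M.mul y e = y := by
    intro y
    have hRinj : Function.Injective (Rmap M x) := by
      rw [injective_iff_map_eq_zero (Rmap M x)]
      intro a ha
      rcases M.no_zero_divisors a x ha with h | h
      · exact h
      · exact absurd h hx0
    apply hRinj
    show M.mul (M.mul y e) x = M.mul y x
    rw [M.assoc, left_id]
  exact ⟨e, left_id, right_id⟩

/-- The centralizer of ψ(ℚ^d) in M_d(ℚ) equals ψ_r(ℚ^d). -/
theorem centralizer_psiL_eq_range_psiR {d : ℕ} (M : QDivMul d) :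
    {T : Matrix (Fin d) (Fin d) ℚ | ∀ x : Fin d → ℚ, T * psiL M x = psiL M x * T}
      = Set.range (psiR M) := by
  ext T
  simp only [Set.mem_setOf_eq, Set.mem_range]
  constructor
  · intro hT
    rcases Nat.eq_zero_or_pos d with hd | hd
    · subst hd
      exact ⟨0, Subsingleton.elim _ _⟩
    obtain ⟨e, hle, hre⟩ := exists_id M hd
    refine ⟨T *ᵥ e, ?_⟩
    apply matrix_ext_of_mulVec
    intro v
    have h1 : T *ᵥ v = T *ᵥ (psiL M v *ᵥ e) := by rw [psiL_mulVec, hre]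
    rw [psiR_mulVec, h1, Matrix.mulVec_mulVec, hT v, ← Matrix.mulVec_mulVec, psiL_mulVec]
  · rintro ⟨u, rfl⟩
    intro x
    apply matrix_ext_of_mulVec
    intro v
    rw [← Matrix.mulVec_mulVec, ← Matrix.mulVec_mulVec, psiL_mulVec, psiR_mulVec,
      psiR_mulVec, psiL_mulVec, M.assoc]
end

section
/- Let ∗ and ⊙ be proper multiplications on ℤ^d with representations ψ, φ. If there exist nonzero v, w ∈ ℤ^d such that x ∗ v ∗ y = x ⊙ w ⊙ y for all x, y ∈ ℤ^d, then ψ(ℚ^d) = φ(ℚ^d). -/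
lemma exists_int_smul {d : ℕ} (x : Fin d → ℚ) :
    ∃ n : ℤ, n ≠ 0 ∧ IsIntVec ((n : ℚ) • x) := by
  refine ⟨∏ i, ((x i).den : ℤ), ?_, ?_⟩
  · exact Finset.prod_ne_zero_iff.mpr fun i _ => Int.natCast_ne_zero.mpr (x i).den_nz
  · intro i
    obtain ⟨c, hc⟩ := Finset.dvd_prod_of_mem (fun i => ((x i).den : ℤ)) (Finset.mem_univ i)
    refine ⟨c * (x i).num, ?_⟩
    have : ((∏ j, ((x j).den : ℤ) : ℤ) : ℚ) = (c : ℚ) * ((x i).den : ℚ) := by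
      rw [hc]; push_cast; ring
    simp only [Pi.smul_apply, smul_eq_mul, this]
    rw [mul_assoc, mul_comm ((x i).den : ℚ) (x i), Rat.mul_den_eq_num]
    push_cast; ring

lemma single_int {d : ℕ} (j : Fin d) : IsIntVec (Pi.single j (1:ℚ)) := by
  intro i
  rcases eq_or_ne i j with rfl | hij
  · exact ⟨1, by simp⟩
  · exact ⟨0, by simp [Pi.single_apply, hij]⟩

lemma rightMul_surj {d : ℕ} (M : QDivMul d) (v : Fin d → ℚ) (hv : v ≠ 0) :
    Function.Surjective (fun x => M.mul x v) := by
  let f : (Fin d → ℚ) →ₗ[ℚ] (Fin d → ℚ) :=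
    { toFun := fun x => M.mul x v
      map_add' := fun x y => M.add_left x y v
      map_smul' := fun q x => M.smul_left q x v }
  have hinj : Function.Injective f := by
    intro a b hab
    have hsub : f (a - b) = 0 := by rw [map_sub, hab, sub_self]
    have : M.mul (a - b) v = 0 := hsub
    rcases M.no_zero_divisors _ _ this with h0 | h0
    · exact sub_eq_zero.mp h0
    · exact absurd h0 hv
  exact LinearMap.injective_iff_surjective.mp hinj

theorem aligned_imp_range_psi_eq' {d : ℕ} (M N : QDivMul d)
    (hM : ∀ x y, IsIntVec x → IsIntVec y → IsIntVec (M.mul x y))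
    (hN : ∀ x y, IsIntVec x → IsIntVec y → IsIntVec (N.mul x y))
    (h : ∃ v w : Fin d → ℚ, v ≠ 0 ∧ w ≠ 0 ∧ IsIntVec v ∧ IsIntVec w ∧
      ∀ x y : Fin d → ℚ, IsIntVec x → IsIntVec y →
        M.mul (M.mul x v) y = N.mul (N.mul x w) y) :
    Set.range (psiL M) = Set.range (psiL N) := by
  obtain ⟨v, w, hv, hw, hvI, hwI, hvw⟩ := h
  have key : ∀ x : Fin d → ℚ, psiL M (M.mul x v) = psiL N (N.mul x w) := by
    intro x
    obtain ⟨n, hn, hni⟩ := exists_int_smul x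
    have hnQ : (n : ℚ) ≠ 0 := Int.cast_ne_zero.mpr hn
    funext i j
    have H := hvw ((n : ℚ) • x) (Pi.single j 1) hni (single_int j)
    rw [M.smul_left, M.smul_left, N.smul_left, N.smul_left] at H
    have := congrFun H i
    simp only [Pi.smul_apply, smul_eq_mul] at this
    have := mul_left_cancel₀ hnQ this
    simpa [psiL] using this
  ext A
  constructor
  · rintro ⟨x, rfl⟩
    obtain ⟨x', rfl⟩ := rightMul_surj M v hv x
    exact ⟨N.mul x' w, (key x').symm⟩
  · rintro ⟨x, rfl⟩
    obtain ⟨x', rfl⟩ := rightMul_surj N w hw x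
    exact ⟨M.mul x' v, key x'⟩

/-- If x ∗ v ∗ y = x ⊙ w ⊙ y on ℤ^d for some nonzero integer vectors v, w,
then the images of the left representations coincide: ψ(ℚ^d) = φ(ℚ^d). -/
theorem aligned_imp_range_psi_eq {d : ℕ} (M N : QDivMul d)
    (hM : ∀ x y, IsIntVec x → IsIntVec y → IsIntVec (M.mul x y))
    (hN : ∀ x y, IsIntVec x → IsIntVec y → IsIntVec (N.mul x y))
    (h : ∃ v w : Fin d → ℚ, v ≠ 0 ∧ w ≠ 0 ∧ IsIntVec v ∧ IsIntVec w ∧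
      ∀ x y : Fin d → ℚ, IsIntVec x → IsIntVec y →
        M.mul (M.mul x v) y = N.mul (N.mul x w) y) :
    Set.range (psiL M) = Set.range (psiL N) :=
  aligned_imp_range_psi_eq' M N hM hN h
end

section
/- Let ∗ and ⊙ be proper multiplications on ℤ^d with left representations ψ, φ. If ψ(ℚ^d) = φ(ℚ^d) as subsets of M_d(ℚ), then there exists v ∈ ℚ^d such that φ(x) = ψ(ψ_r(v)x) for all x ∈ ℚ^d, where ψ_r is the right representation of ∗. -/
namespace QDivMulAux

variable {d : ℕ}

/-- Left multiplication as a linear map. -/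
def lmul (M : QDivMul d) (w : Fin d → ℚ) : (Fin d → ℚ) →ₗ[ℚ] (Fin d → ℚ) where
  toFun := M.mul w
  map_add' := M.add_right w
  map_smul' := fun q x => M.smul_right q w x

/-- Right multiplication as a linear map. -/
def rmul (M : QDivMul d) (a : Fin d → ℚ) : (Fin d → ℚ) →ₗ[ℚ] (Fin d → ℚ) where
  toFun := fun x => M.mul x a
  map_add' := fun x y => M.add_left x y a
  map_smul' := fun q x => M.smul_left q x a

lemma mul_expand (M : QDivMul d) (w z : Fin d → ℚ) :
    M.mul w z = ∑ j, z j • M.mul w (Pi.single j 1) := by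
  have hz : z = ∑ j, z j • (Pi.single j 1 : Fin d → ℚ) := by
    funext i
    simp [Finset.sum_apply, Pi.single_apply]
  calc M.mul w z = lmul M w z := rfl
    _ = lmul M w (∑ j, z j • (Pi.single j 1 : Fin d → ℚ)) := by rw [← hz]
    _ = ∑ j, z j • lmul M w (Pi.single j 1) := by
        rw [map_sum]
        exact Finset.sum_congr rfl fun j _ => (lmul M w).map_smul _ _
    _ = ∑ j, z j • M.mul w (Pi.single j 1) := rfl

lemma key (M N : QDivMul d) {w x : Fin d → ℚ} (hwx : psiL M w = psiL N x)
    (z : Fin d → ℚ) : M.mul w z = N.mul x z := by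
  rw [mul_expand M, mul_expand N]
  refine Finset.sum_congr rfl fun j _ => ?_
  have hcol : M.mul w (Pi.single j 1) = N.mul x (Pi.single j 1) :=
    funext fun i => congrFun (congrFun hwx i) j
  rw [hcol]

lemma lmul_surj (M : QDivMul d) (w : Fin d → ℚ) (hw : w ≠ 0) :
    Function.Surjective (lmul M w) := by
  apply LinearMap.surjective_of_injective
  rw [injective_iff_map_eq_zero]
  intro z hz
  rcases M.no_zero_divisors w z hz with h' | h'
  · exact absurd h' hw
  · exact h'

lemma rmul_surj (M : QDivMul d) (a : Fin d → ℚ) (ha : a ≠ 0) :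
    Function.Surjective (rmul M a) := by
  apply LinearMap.surjective_of_injective
  rw [injective_iff_map_eq_zero]
  intro z hz
  rcases M.no_zero_divisors z a hz with h' | h'
  · exact h'
  · exact absurd h' ha

end QDivMulAux

open QDivMulAux in
/-- If ψ(ℚ^d) = φ(ℚ^d), then there is v ∈ ℚ^d with φ(x) = ψ(ψ_r(v)x) = ψ(x ∗ v)
for all x ∈ ℚ^d. -/
theorem range_psi_eq_imp_exists_twist {d : ℕ} (M N : QDivMul d)
    (hM : ∀ x y, IsIntVec x → IsIntVec y → IsIntVec (M.mul x y))
    (hN : ∀ x y, IsIntVec x → IsIntVec y → IsIntVec (N.mul x y))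
    (h : Set.range (psiL M) = Set.range (psiL N)) :
    ∃ v : Fin d → ℚ, ∀ x : Fin d → ℚ, psiL N x = psiL M (M.mul x v) := by
  rcases Nat.eq_zero_or_pos d with hd | hd
  · subst hd
    exact ⟨0, fun x => by ext i j; exact i.elim0⟩
  · set i0 : Fin d := ⟨0, hd⟩ with hi0
    set a0 : Fin d → ℚ := Pi.single i0 1 with ha0def
    have ha0 : a0 ≠ 0 := by
      intro h0
      have := congrFun h0 i0
      simp [ha0def] at this
    -- a right identity e for M
    obtain ⟨e, he⟩ := lmul_surj M a0 ha0 a0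
    have he' : M.mul a0 e = a0 := he
    have hre : ∀ y, M.mul y e = y := by
      intro y
      obtain ⟨y', hy'⟩ := rmul_surj M a0 ha0 y
      have hy'' : M.mul y' a0 = y := hy'
      calc M.mul y e = M.mul (M.mul y' a0) e := by rw [hy'']
        _ = M.mul y' (M.mul a0 e) := M.assoc _ _ _
        _ = y := by rw [he', hy'']
    -- the correspondences f and g from the range equality
    have hMN : ∀ x, ∃ w, psiL M w = psiL N x := fun x => h.ge (Set.mem_range_self x)
    choose f hf using hMN
    have hNM : ∀ y, ∃ u, psiL N u = psiL M y := fun y => h.le (Set.mem_range_self y)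
    choose g hg using hNM
    have cancel : ∀ w w', (∀ z, M.mul w z = M.mul w' z) → w = w' := by
      intro w w' hz
      have := hz e
      rwa [hre, hre] at this
    have hfmul : ∀ u z, f (N.mul u z) = M.mul (f u) (f z) := by
      intro u z
      refine cancel _ _ fun y => ?_
      calc M.mul (f (N.mul u z)) y = N.mul (N.mul u z) y := key M N (hf _) y
        _ = N.mul u (N.mul z y) := N.assoc _ _ _
        _ = M.mul (f u) (N.mul z y) := (key M N (hf u) _).symm
        _ = M.mul (f u) (M.mul (f z) y) := by rw [key M N (hf z) y]
        _ = M.mul (M.mul (f u) (f z)) y := (M.assoc _ _ _).symm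
    refine ⟨f e, fun x => ?_⟩
    have hfg : f (g x) = x := by
      refine cancel _ _ fun z => ?_
      rw [key M N (hf (g x)) z, key N M (hg x) z]
    have hfx : f x = M.mul x (f e) := by
      calc f x = f (M.mul x e) := by rw [hre]
        _ = f (N.mul (g x) e) := by rw [key N M (hg x) e]
        _ = M.mul (f (g x)) (f e) := hfmul _ _
        _ = M.mul x (f e) := by rw [hfg]
    rw [← hfx, hf]
end

section
/- If two proper multiplications ∗ and ⊙ on ℤ^d are aligned (there exist nonzero v, w ∈ ℤ^d with x ∗ v ∗ y = x ⊙ w ⊙ y for all x, y), then the densities with respect to the semigroups (ℤ^d\{0}, ∗) and (ℤ^d\{0}, ⊙) coincide: d*_∗(A) = d*_⊙(A) for all A ⊆ ℤ^d \ {0}. -/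
/-- A proper multiplication on ℤ^d: a biadditive associative operation making
(ℤ^d, +, ∗) a ring without zero divisors. -/
structure ProperMult (d : ℕ) where
  mul : (Fin d → ℤ) → (Fin d → ℤ) → (Fin d → ℤ)
  add_left : ∀ x y z, mul (x + y) z = mul x z + mul y z
  add_right : ∀ x y z, mul x (y + z) = mul x y + mul x z
  assoc : ∀ x y z, mul (mul x y) z = mul x (mul y z)
  no_zero_divisors : ∀ x y, mul x y = 0 → x = 0 ∨ y = 0

/-- Density with respect to the semigroup (ℤ^d \ {0}, ∗):
d*(A) = sup{α ≥ 0 | ∀ finite F ⊆ ℤ^d\{0}, ∃ x ≠ 0, |(F ∗ x) ∩ A| ≥ α|F|}. -/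
noncomputable def densM {d : ℕ} (P : ProperMult d) (A : Set (Fin d → ℤ)) : ℝ :=
  sSup {α : ℝ | 0 ≤ α ∧ ∀ F : Finset (Fin d → ℤ), (∀ f ∈ F, f ≠ 0) →
    ∃ x : Fin d → ℤ, x ≠ 0 ∧
      α * (F.card : ℝ) ≤ ((((fun f => P.mul f x) '' (F : Set (Fin d → ℤ))) ∩ A).ncard : ℝ)}

/-- ∗ and ⊙ are aligned: there are nonzero v, w with x ∗ v ∗ y = x ⊙ w ⊙ y. -/
def Aligned {d : ℕ} (P Q : ProperMult d) : Prop :=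
  ∃ v w : Fin d → ℤ, v ≠ 0 ∧ w ≠ 0 ∧
    ∀ x y : Fin d → ℤ, P.mul (P.mul x v) y = Q.mul (Q.mul x w) y

namespace ProperMult

variable {d : ℕ}

lemma zero_mul' (P : ProperMult d) (y : Fin d → ℤ) : P.mul 0 y = 0 := by
  have h : P.mul 0 y = P.mul 0 y + P.mul 0 y := by
    have h := P.add_left 0 0 y; simpa using h
  exact (left_eq_add.mp h)

lemma neg_mul' (P : ProperMult d) (x y : Fin d → ℤ) : P.mul (-x) y = -(P.mul x y) := by
  have h := P.add_left x (-x) y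
  simp only [add_neg_cancel, P.zero_mul'] at h
  exact (eq_neg_of_add_eq_zero_right h.symm)

lemma mulv_injective (P : ProperMult d) {v : Fin d → ℤ} (hv : v ≠ 0) :
    Function.Injective (fun f => P.mul f v) := by
  intro a b hab
  simp only at hab
  have h : P.mul (a - b) v = 0 := by
    have := P.add_left a (-b) v
    rw [P.neg_mul'] at this
    simpa [sub_eq_add_neg, hab] using this
  rcases P.no_zero_divisors _ _ h with h1 | h1
  · exact sub_eq_zero.mp h1
  · exact absurd h1 hv

/-- The defining set of `densM P A` is contained in that of `densM Q A`. -/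
lemma densSet_subset (P Q : ProperMult d) (v w : Fin d → ℤ) (hv : v ≠ 0) (hw : w ≠ 0)
    (hal : ∀ x y : Fin d → ℤ, P.mul (P.mul x v) y = Q.mul (Q.mul x w) y)
    (A : Set (Fin d → ℤ)) :
    {α : ℝ | 0 ≤ α ∧ ∀ F : Finset (Fin d → ℤ), (∀ f ∈ F, f ≠ 0) →
      ∃ x : Fin d → ℤ, x ≠ 0 ∧
        α * (F.card : ℝ) ≤ ((((fun f => P.mul f x) '' (F : Set (Fin d → ℤ))) ∩ A).ncard : ℝ)}
    ⊆ {α : ℝ | 0 ≤ α ∧ ∀ F : Finset (Fin d → ℤ), (∀ f ∈ F, f ≠ 0) →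
      ∃ x : Fin d → ℤ, x ≠ 0 ∧
        α * (F.card : ℝ) ≤ ((((fun f => Q.mul f x) '' (F : Set (Fin d → ℤ))) ∩ A).ncard : ℝ)} := by
  rintro α ⟨hα, hP⟩
  refine ⟨hα, fun F hF => ?_⟩
  set F₁ : Finset (Fin d → ℤ) := F.image (fun f => P.mul f v) with hF₁
  have hF₁ne : ∀ g ∈ F₁, g ≠ 0 := by
    intro g hg
    simp only [hF₁, Finset.mem_image] at hg
    obtain ⟨f, hf, rfl⟩ := hg
    intro h0
    rcases P.no_zero_divisors _ _ h0 with h | h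
    · exact hF f hf h
    · exact hv h
  obtain ⟨x, hx, hcard⟩ := hP F₁ hF₁ne
  refine ⟨Q.mul w x, ?_, ?_⟩
  · intro h0
    rcases Q.no_zero_divisors _ _ h0 with h | h
    · exact hw h
    · exact hx h
  · have hcardeq : F₁.card = F.card :=
      Finset.card_image_of_injective _ (P.mulv_injective hv)
    have hseteq : ((fun g => P.mul g x) '' (F₁ : Set (Fin d → ℤ)))
        = ((fun f => Q.mul f (Q.mul w x)) '' (F : Set (Fin d → ℤ))) := by
      rw [hF₁, Finset.coe_image, ← Set.image_comp]
      apply Set.image_congr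
      intro f _
      simp only [Function.comp_apply]
      rw [hal f x, Q.assoc]
    rw [hcardeq, hseteq] at hcard
    exact hcard

end ProperMult

/-- Aligned proper multiplications have the same density function. -/
theorem densM_eq_of_aligned {d : ℕ} (P Q : ProperMult d) (hal : Aligned P Q)
    (A : Set (Fin d → ℤ)) (hA : (0 : Fin d → ℤ) ∉ A) :
    densM P A = densM Q A := by
  obtain ⟨v, w, hv, hw, h⟩ := hal
  unfold densM
  congr 1
  exact Set.Subset.antisymm
    (ProperMult.densSet_subset P Q v w hv hw h A)
    (ProperMult.densSet_subset Q P w v hw hv (fun x y => (h x y).symm) A)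
end

section
/- If two proper multiplications ∗ and ⊙ on ℤ^d are aligned, then a set A ⊆ ℤ^d \ {0} is thick with respect to ∗ if and only if it is thick with respect to ⊙; consequently the classes of syndetic, piecewise syndetic, and PS* sets for ∗ and ⊙ also coincide. -/
/-- A is multiplicatively (left) thick with respect to P in (ℤ^d\{0}, ∗). -/
def ThickM {d : ℕ} (P : ProperMult d) (A : Set (Fin d → ℤ)) : Prop :=
  ∀ F : Finset (Fin d → ℤ), (∀ f ∈ F, f ≠ 0) →
    ∃ x : Fin d → ℤ, x ≠ 0 ∧ ∀ f ∈ F, P.mul f x ∈ A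

/-- A is multiplicatively (right) syndetic with respect to P in (ℤ^d\{0}, ∗). -/
def SyndM {d : ℕ} (P : ProperMult d) (A : Set (Fin d → ℤ)) : Prop :=
  ∃ F : Finset (Fin d → ℤ), (∀ s ∈ F, s ≠ 0) ∧
    ∀ x : Fin d → ℤ, x ≠ 0 → ∃ s ∈ F, P.mul s x ∈ A

/-- A is multiplicatively piecewise syndetic with respect to P. -/
def PSynM {d : ℕ} (P : ProperMult d) (A : Set (Fin d → ℤ)) : Prop :=
  ∃ F : Finset (Fin d → ℤ), (∀ s ∈ F, s ≠ 0) ∧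
    ThickM P {x : Fin d → ℤ | ∃ s ∈ F, P.mul s x ∈ A}

/-- A is multiplicatively PS* with respect to P: A meets every piecewise
syndetic subset of ℤ^d \ {0}. -/
def PSStarM {d : ℕ} (P : ProperMult d) (A : Set (Fin d → ℤ)) : Prop :=
  ∀ B : Set (Fin d → ℤ), (0 : Fin d → ℤ) ∉ B → PSynM P B → (A ∩ B).Nonempty


lemma aligned_symm {d : ℕ} {P Q : ProperMult d} (h : Aligned P Q) : Aligned Q P := by
  obtain ⟨v, w, hv, hw, he⟩ := h
  exact ⟨w, v, hw, hv, fun x y => (he x y).symm⟩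

lemma pm_ne_zero {d : ℕ} (P : ProperMult d) {x y : Fin d → ℤ} (hx : x ≠ 0) (hy : y ≠ 0) :
    P.mul x y ≠ 0 := fun h => by
  rcases P.no_zero_divisors _ _ h with h | h
  · exact hx h
  · exact hy h

lemma thick_subset {d : ℕ} {P : ProperMult d} {A B : Set (Fin d → ℤ)} (hAB : A ⊆ B)
    (h : ThickM P A) : ThickM P B := by
  intro F hF
  obtain ⟨x, hx, h2⟩ := h F hF
  exact ⟨x, hx, fun f hf => hAB (h2 f hf)⟩

lemma thick_imp {d : ℕ} {P Q : ProperMult d} (h : Aligned P Q) {A : Set (Fin d → ℤ)}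
    (hT : ThickM P A) : ThickM Q A := by
  obtain ⟨v, w, hv, hw, he⟩ := h
  intro F hF
  obtain ⟨y, hy, hy2⟩ := hT (F.image (fun f => P.mul f v)) (by
    intro f hf
    simp only [Finset.mem_image] at hf
    obtain ⟨g, hg, rfl⟩ := hf
    exact pm_ne_zero P (hF g hg) hv)
  refine ⟨Q.mul w y, pm_ne_zero Q hw hy, fun f hf => ?_⟩
  have h3 := hy2 (P.mul f v) (Finset.mem_image_of_mem _ hf)
  rwa [he f y, Q.assoc] at h3

lemma thick_iff' {d : ℕ} {P Q : ProperMult d} (h : Aligned P Q) (A : Set (Fin d → ℤ)) :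
    ThickM P A ↔ ThickM Q A :=
  ⟨thick_imp h, thick_imp (aligned_symm h)⟩

lemma synd_iff_not_thick {d : ℕ} (P : ProperMult d) (A : Set (Fin d → ℤ)) :
    SyndM P A ↔ ¬ ThickM P Aᶜ := by
  unfold SyndM ThickM
  push_neg
  constructor
  · rintro ⟨F, hF, h2⟩
    exact ⟨F, hF, fun x hx => by obtain ⟨s, hs, hsx⟩ := h2 x hx; exact ⟨s, hs, fun hc => hc hsx⟩⟩
  · rintro ⟨F, hF, h2⟩
    exact ⟨F, hF, fun x hx => by obtain ⟨s, hs, hsx⟩ := h2 x hx; exact ⟨s, hs, not_not.mp hsx⟩⟩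

lemma psyn_imp {d : ℕ} {P Q : ProperMult d} (h : Aligned P Q) {A : Set (Fin d → ℤ)}
    (hP : PSynM P A) : PSynM Q A := by
  obtain ⟨F, hF, hT⟩ := hP
  obtain ⟨v, w, hv, hw, he⟩ := h
  refine ⟨F.image (fun s => Q.mul s w), ?_, ?_⟩
  · intro s hs
    simp only [Finset.mem_image] at hs
    obtain ⟨t, ht, rfl⟩ := hs
    exact pm_ne_zero Q (hF t ht) hw
  · have hT2 : ThickM P {x : Fin d → ℤ | ∃ s ∈ F, P.mul (P.mul s v) x ∈ A} := by
      intro G hG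
      obtain ⟨x, hx, h2⟩ := hT (G.image (fun g => P.mul v g)) (by
        intro g hg
        simp only [Finset.mem_image] at hg
        obtain ⟨g', hg', rfl⟩ := hg
        exact pm_ne_zero P hv (hG g' hg'))
      refine ⟨x, hx, fun g hg => ?_⟩
      obtain ⟨s, hs, hsa⟩ := h2 (P.mul v g) (Finset.mem_image_of_mem _ hg)
      refine ⟨s, hs, ?_⟩
      rwa [P.assoc, ← P.assoc v g x]
    have hT3 : ThickM Q {x : Fin d → ℤ | ∃ s ∈ F, Q.mul (Q.mul s w) x ∈ A} := by
      refine thick_imp ⟨v, w, hv, hw, he⟩ ?_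
      have hset : {x : Fin d → ℤ | ∃ s ∈ F, Q.mul (Q.mul s w) x ∈ A} =
          {x : Fin d → ℤ | ∃ s ∈ F, P.mul (P.mul s v) x ∈ A} := by
        ext x
        simp only [Set.mem_setOf_eq]
        constructor
        · rintro ⟨s, hs, hsx⟩; exact ⟨s, hs, by rwa [he]⟩
        · rintro ⟨s, hs, hsx⟩; exact ⟨s, hs, by rwa [← he]⟩
      rw [hset]
      exact hT2
    refine thick_subset ?_ hT3
    rintro x ⟨s, hs, hsx⟩
    exact ⟨Q.mul s w, Finset.mem_image_of_mem _ hs, hsx⟩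

lemma psyn_iff' {d : ℕ} {P Q : ProperMult d} (h : Aligned P Q) (A : Set (Fin d → ℤ)) :
    PSynM P A ↔ PSynM Q A :=
  ⟨psyn_imp h, psyn_imp (aligned_symm h)⟩

/-- For aligned proper multiplications the classes of thick, syndetic,
piecewise syndetic and PS* sets coincide. -/
theorem classes_eq_of_aligned {d : ℕ} (P Q : ProperMult d) (hal : Aligned P Q)
    (A : Set (Fin d → ℤ)) (hA : (0 : Fin d → ℤ) ∉ A) :
    (ThickM P A ↔ ThickM Q A) ∧ (SyndM P A ↔ SyndM Q A) ∧
    (PSynM P A ↔ PSynM Q A) ∧ (PSStarM P A ↔ PSStarM Q A) := by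
  refine ⟨thick_iff' hal A, ?_, psyn_iff' hal A, ?_⟩
  · rw [synd_iff_not_thick, synd_iff_not_thick, thick_iff' hal]
  · constructor
    · intro hP B h0 hB
      exact hP B h0 ((psyn_iff' hal B).mpr hB)
    · intro hQ B h0 hB
      exact hQ B h0 ((psyn_iff' hal B).mp hB)
end

section
/- Let ∗ be a proper multiplication on ℤ^d. For A ⊆ ℤ^d \ {0}, the density d*_∗(A) equals the 'infinitary' density: sup{α ≥ 0 | for all finite F ⊆ ℤ^d\{0}, there exist infinitely many z ∈ ℤ^d\{0} with |(F ∗ z) ∩ A| ≥ α|F|}. -/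
namespace PMaux
variable {d : ℕ} (P : ProperMult d)

lemma mul_zero' (x : Fin d → ℤ) : P.mul x 0 = 0 := by
  have h := P.add_right x 0 0
  rw [add_zero] at h
  have : P.mul x 0 + P.mul x 0 = P.mul x 0 + 0 := by rw [← h, add_zero]
  exact add_left_cancel this

lemma zero_mul' (x : Fin d → ℤ) : P.mul 0 x = 0 := by
  have h := P.add_left 0 0 x
  rw [add_zero] at h
  have : P.mul 0 x + P.mul 0 x = P.mul 0 x + 0 := by rw [← h, add_zero]
  exact add_left_cancel this

lemma mul_sub' (x y z : Fin d → ℤ) : P.mul x (y - z) = P.mul x y - P.mul x z := by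
  have h := P.add_right x (y - z) z
  rw [sub_add_cancel] at h
  exact eq_sub_of_add_eq h.symm

lemma sub_mul' (x y z : Fin d → ℤ) : P.mul (x - y) z = P.mul x z - P.mul y z := by
  have h := P.add_left (x - y) y z
  rw [sub_add_cancel] at h
  exact eq_sub_of_add_eq h.symm

lemma cancel_left {x : Fin d → ℤ} (hx : x ≠ 0) {y y' : Fin d → ℤ}
    (h : P.mul x y = P.mul x y') : y = y' := by
  have h0 : P.mul x (y - y') = 0 := by rw [mul_sub', h, sub_self]
  rcases P.no_zero_divisors _ _ h0 with h1 | h1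
  · exact absurd h1 hx
  · exact sub_eq_zero.mp h1

lemma cancel_right {z : Fin d → ℤ} (hz : z ≠ 0) {y y' : Fin d → ℤ}
    (h : P.mul y z = P.mul y' z) : y = y' := by
  have h0 : P.mul (y - y') z = 0 := by rw [sub_mul', h, sub_self]
  rcases P.no_zero_divisors _ _ h0 with h1 | h1
  · exact sub_eq_zero.mp h1
  · exact absurd h1 hz

lemma mul_ne_zero' {x y : Fin d → ℤ} (hx : x ≠ 0) (hy : y ≠ 0) : P.mul x y ≠ 0 := by
  intro h
  rcases P.no_zero_divisors _ _ h with h1 | h1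
  exacts [hx h1, hy h1]

end PMaux

namespace PMaux
variable {d : ℕ} (P : ProperMult d)

lemma exists_Y (hinf : {z : Fin d → ℤ | z ≠ 0}.Infinite)
    (F : Finset (Fin d → ℤ)) (hF : ∀ f ∈ F, f ≠ 0) (N : ℕ) :
    ∃ Y : Finset (Fin d → ℤ), Y.card = N ∧ (∀ y ∈ Y, y ≠ 0) ∧
      Set.InjOn (fun p : (Fin d → ℤ) × (Fin d → ℤ) => P.mul p.1 p.2) ↑(F ×ˢ Y) := by
  classical
  induction N with
  | zero =>
    refine ⟨∅, rfl, by simp, ?_⟩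
    simp [Set.InjOn]
  | succ N ih =>
    obtain ⟨Y, hcard, hY0, hinj⟩ := ih
    -- bad set
    have hbadfin : (↑Y ∪ ⋃ f ∈ (↑F : Set (Fin d → ℤ)), ⋃ g ∈ (↑F : Set (Fin d → ℤ)),
        ⋃ y' ∈ (↑Y : Set (Fin d → ℤ)), {y | P.mul f y = P.mul g y'} :
        Set (Fin d → ℤ)).Finite := by
      refine (Y.finite_toSet.union ?_)
      refine Set.Finite.biUnion F.finite_toSet fun f hf => ?_
      refine Set.Finite.biUnion F.finite_toSet fun g hg => ?_
      refine Set.Finite.biUnion Y.finite_toSet fun y' hy' => ?_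
      apply Set.Subsingleton.finite
      intro a ha b hb
      exact cancel_left P (hF f hf) (ha.trans hb.symm)
    obtain ⟨y, hy⟩ := (hinf.diff hbadfin).nonempty
    have hy0 : y ≠ 0 := hy.1
    have hyB := hy.2
    have hyY : y ∉ Y := fun h => hyB (Set.mem_union_left _ h)
    have hynew : ∀ f ∈ F, ∀ g ∈ F, ∀ y' ∈ Y, P.mul f y ≠ P.mul g y' := by
      intro f hf g hg y' hy' heq
      exact hyB (Set.mem_union_right _ (by
        simp only [Set.mem_iUnion]
        exact ⟨f, hf, g, hg, y', hy', heq⟩))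
    refine ⟨insert y Y, by rw [Finset.card_insert_of_notMem hyY, hcard], ?_, ?_⟩
    · intro a ha
      rcases Finset.mem_insert.mp ha with rfl | ha
      · exact hy0
      · exact hY0 a ha
    · rintro ⟨f, a⟩ hfa ⟨g, b⟩ hgb heq
      simp only [Finset.coe_product, Set.mem_prod, Finset.mem_coe, Finset.mem_insert] at hfa hgb
      obtain ⟨hf, ha⟩ := hfa
      obtain ⟨hg, hb⟩ := hgb
      simp only at heq
      rcases ha with rfl | ha <;> rcases hb with rfl | hb
      · have : f = g := cancel_right P hy0 heq
        simp [this]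
      · exact absurd heq (hynew f hf g hg b hb)
      · exact absurd heq.symm (hynew g hg f hf a ha)
      · have hm1 : ((f, a) : (Fin d → ℤ) × (Fin d → ℤ)) ∈ ↑(F ×ˢ Y) := by
          simp [Set.mem_prod, hf, ha]
        have hm2 : ((g, b) : (Fin d → ℤ) × (Fin d → ℤ)) ∈ ↑(F ×ˢ Y) := by
          simp [Set.mem_prod, hg, hb]
        exact hinj hm1 hm2 heq

end PMaux

namespace PMaux
variable {d : ℕ} (P : ProperMult d)

open Classical in
noncomputable def cnt (A : Set (Fin d → ℤ)) (F : Finset (Fin d → ℤ)) (x : Fin d → ℤ) : ℕ :=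
  ((F.image (fun f => P.mul f x)).filter (· ∈ A)).card

open Classical in
lemma cnt_eq (A : Set (Fin d → ℤ)) (F : Finset (Fin d → ℤ)) (x : Fin d → ℤ) :
    (((fun f => P.mul f x) '' (F : Set (Fin d → ℤ))) ∩ A).ncard = cnt P A F x := by
  rw [cnt, ← Set.ncard_coe_finset]
  congr 1
  ext v
  simp [Set.mem_inter_iff, Finset.coe_filter]

lemma cnt_le (A : Set (Fin d → ℤ)) (F : Finset (Fin d → ℤ)) (x : Fin d → ℤ) :
    cnt P A F x ≤ F.card := by
  classical
  exact le_trans (Finset.card_filter_le _ _) (Finset.card_image_le)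

end PMaux

namespace PMaux
variable {d : ℕ} (P : ProperMult d)

open Classical in
lemma witness_infinite (A : Set (Fin d → ℤ))
    (hinf : {z : Fin d → ℤ | z ≠ 0}.Infinite)
    {α : ℝ} (hα0 : 0 ≤ α)
    (hα : ∀ F : Finset (Fin d → ℤ), (∀ f ∈ F, f ≠ 0) →
      ∃ x : Fin d → ℤ, x ≠ 0 ∧
        α * (F.card : ℝ) ≤ ((((fun f => P.mul f x) '' (F : Set (Fin d → ℤ))) ∩ A).ncard : ℝ))
    (F : Finset (Fin d → ℤ)) (hF : ∀ f ∈ F, f ≠ 0) :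
    {z : Fin d → ℤ | z ≠ 0 ∧
      α * (F.card : ℝ) ≤ ((((fun f => P.mul f z) '' (F : Set (Fin d → ℤ))) ∩ A).ncard : ℝ)}.Infinite := by
  set n := F.card with hn
  by_cases hpos : α * (n : ℝ) ≤ 0
  · refine hinf.mono fun z hz => ⟨hz, le_trans hpos (by positivity)⟩
  push_neg at hpos
  have hn1 : 1 ≤ n := by
    by_contra h
    push_neg at h
    interval_cases n
    simp at hpos
  have hn0 : (0:ℝ) < (n:ℝ) := by exact_mod_cast hn1
  -- assume finitely many witnesses
  by_contra hfin
  rw [Set.not_infinite] at hfin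
  set Z := hfin.toFinset with hZ
  set m := Z.card with hm
  set C := ⌈α * (n:ℝ)⌉₊ with hC
  have hC1 : 1 ≤ C := Nat.one_le_iff_ne_zero.mpr (by
    simp only [hC, ne_eq, Nat.ceil_eq_zero, not_le]
    exact hpos)
  have hClt : ((C:ℝ) - 1) < α * n := by
    have := Nat.ceil_lt_add_one (le_of_lt hpos)
    push_cast
    linarith
  set δ := α * (n:ℝ) - ((C:ℝ) - 1) with hδ
  have hδpos : 0 < δ := by simp only [hδ]; linarith
  obtain ⟨N, hN⟩ := exists_nat_gt ((m * n : ℝ) / δ)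
  have hNδ : (m:ℝ) * n < N * δ := by
    rw [div_lt_iff₀ hδpos] at hN
    linarith
  obtain ⟨Y, hYcard, hY0, hinj⟩ := exists_Y P hinf F hF N
  set F' := (F ×ˢ Y).image (fun p : (Fin d → ℤ) × (Fin d → ℤ) => P.mul p.1 p.2) with hF'
  have hF'card : F'.card = n * N := by
    rw [hF', Finset.card_image_of_injOn hinj, Finset.card_product, hYcard]
  have hF'0 : ∀ v ∈ F', v ≠ 0 := by
    intro v hv
    simp only [hF', Finset.mem_image, Finset.mem_product] at hv
    obtain ⟨⟨f, y⟩, ⟨hf, hy⟩, rfl⟩ := hv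
    exact mul_ne_zero' P (hF f hf) (hY0 y hy)
  obtain ⟨z, hz0, hzcnt⟩ := hα F' hF'0
  rw [cnt_eq, hF'card] at hzcnt
  -- decompose the count
  have himg : F'.image (fun v => P.mul v z)
      = Y.biUnion (fun y => F.image (fun f => P.mul f (P.mul y z))) := by
    ext v
    simp only [hF', Finset.image_image, Finset.mem_image, Finset.mem_biUnion,
      Finset.mem_product, Function.comp]
    constructor
    · rintro ⟨⟨f, y⟩, ⟨hf, hy⟩, rfl⟩
      exact ⟨y, hy, f, hf, (P.assoc f y z).symm⟩
    · rintro ⟨y, hy, f, hf, rfl⟩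
      exact ⟨⟨f, y⟩, ⟨hf, hy⟩, P.assoc f y z⟩
  have hdisj : ∀ y₁ ∈ Y, ∀ y₂ ∈ Y, y₁ ≠ y₂ →
      Disjoint ((F.image (fun f => P.mul f (P.mul y₁ z))).filter (· ∈ A))
        ((F.image (fun f => P.mul f (P.mul y₂ z))).filter (· ∈ A)) := by
    intro y₁ hy₁ y₂ hy₂ hne
    rw [Finset.disjoint_left]
    intro v hv1 hv2
    simp only [Finset.mem_filter, Finset.mem_image] at hv1 hv2
    obtain ⟨⟨f, hf, hfv⟩, -⟩ := hv1
    obtain ⟨⟨g, hg, hgv⟩, -⟩ := hv2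
    have : P.mul (P.mul f y₁) z = P.mul (P.mul g y₂) z := by
      rw [P.assoc, P.assoc, hfv, hgv]
    have h2 : P.mul f y₁ = P.mul g y₂ := cancel_right P hz0 this
    have hm1 : ((f, y₁) : (Fin d → ℤ) × (Fin d → ℤ)) ∈ ↑(F ×ˢ Y) := by
      simp [Set.mem_prod, hf, hy₁]
    have hm2 : ((g, y₂) : (Fin d → ℤ) × (Fin d → ℤ)) ∈ ↑(F ×ˢ Y) := by
      simp [Set.mem_prod, hg, hy₂]
    exact hne (congrArg Prod.snd (hinj hm1 hm2 h2))
  have hsplit : cnt P A F' z = ∑ y ∈ Y, cnt P A F (P.mul y z) := by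
    rw [cnt, himg, Finset.filter_biUnion, Finset.card_biUnion hdisj]
    rfl
  -- good set
  set G := Y.filter (fun y => C ≤ cnt P A F (P.mul y z)) with hG
  have hGsub : ∀ y ∈ G, P.mul y z ∈ Z := by
    intro y hy
    simp only [hG, Finset.mem_filter] at hy
    rw [hZ, Set.Finite.mem_toFinset]
    refine ⟨mul_ne_zero' P (hY0 y hy.1) hz0, ?_⟩
    rw [cnt_eq]
    exact Nat.ceil_le.mp hy.2
  have hGm : G.card ≤ m := by
    rw [hm]
    apply Finset.card_le_card_of_injOn (fun y => P.mul y z) hGsub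
    intro a _ b _ hab
    exact cancel_right P hz0 hab
  -- sum bound
  have hsum : (∑ y ∈ Y, cnt P A F (P.mul y z)) ≤ G.card * n + N * (C - 1) := by
    rw [← Finset.sum_filter_add_sum_filter_not Y (fun y => C ≤ cnt P A F (P.mul y z))]
    refine Nat.add_le_add ?_ ?_
    · calc ∑ y ∈ G, cnt P A F (P.mul y z) ≤ ∑ _y ∈ G, n :=
            Finset.sum_le_sum fun y _ => cnt_le P A F _
        _ = G.card * n := by rw [Finset.sum_const, smul_eq_mul]
    · calc ∑ y ∈ Y.filter (fun y => ¬ C ≤ cnt P A F (P.mul y z)), cnt P A F (P.mul y z)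
          ≤ ∑ _y ∈ Y.filter (fun y => ¬ C ≤ cnt P A F (P.mul y z)), (C - 1) := by
            apply Finset.sum_le_sum
            intro y hy
            simp only [Finset.mem_filter, not_le] at hy
            omega
        _ ≤ N * (C - 1) := by
            rw [Finset.sum_const, smul_eq_mul]
            gcongr
            exact le_trans (Finset.card_filter_le _ _) (le_of_eq hYcard)
  -- contradiction
  have hcast : ((∑ y ∈ Y, cnt P A F (P.mul y z) : ℕ) : ℝ) ≤ (G.card : ℝ) * n + N * ((C:ℝ) - 1) := by
    have := hsum
    have hC1' : ((C - 1 : ℕ) : ℝ) = (C:ℝ) - 1 := by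
      push_cast [Nat.cast_sub hC1]
      ring
    calc ((∑ y ∈ Y, cnt P A F (P.mul y z) : ℕ) : ℝ) ≤ ((G.card * n + N * (C - 1) : ℕ) : ℝ) := by
          exact_mod_cast this
      _ = (G.card : ℝ) * n + N * ((C:ℝ) - 1) := by push_cast [Nat.cast_sub hC1]; ring
  have hzcnt' : α * ((n : ℝ) * N) ≤ (∑ y ∈ Y, cnt P A F (P.mul y z) : ℕ) := by
    rw [← hsplit]
    calc α * ((n:ℝ) * N) = α * ((n * N : ℕ) : ℝ) := by push_cast; ring
      _ ≤ _ := hzcnt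
  have hGn : (G.card : ℝ) * n ≤ (m : ℝ) * n := by
    have : (G.card : ℝ) ≤ (m : ℝ) := by exact_mod_cast hGm
    nlinarith
  have hfinal : (N : ℝ) * δ ≤ (G.card : ℝ) * n := by
    have : α * ((n:ℝ) * N) ≤ (G.card : ℝ) * n + N * ((C:ℝ) - 1) := le_trans hzcnt' hcast
    simp only [hδ]
    have expand : (N:ℝ) * (α * (n:ℝ) - ((C:ℝ) - 1)) = α * ((n:ℝ) * N) - (N:ℝ) * ((C:ℝ) - 1) := by
      ring
    rw [expand]
    linarith
  linarith

end PMaux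


/-- The density equals the "infinitary" density: the witnesses z may be taken
from an infinite set. -/
theorem densM_eq_infinitary {d : ℕ} (P : ProperMult d) (A : Set (Fin d → ℤ))
    (hA : (0 : Fin d → ℤ) ∉ A) :
    densM P A = sSup {α : ℝ | 0 ≤ α ∧ ∀ F : Finset (Fin d → ℤ), (∀ f ∈ F, f ≠ 0) →
      {z : Fin d → ℤ | z ≠ 0 ∧
        α * (F.card : ℝ) ≤ ((((fun f => P.mul f z) '' (F : Set (Fin d → ℤ))) ∩ A).ncard : ℝ)}.Infinite} := by
  rw [densM]
  congr 1
  ext α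
  simp only [Set.mem_setOf_eq]
  constructor
  · rintro ⟨hα0, hα⟩
    refine ⟨hα0, fun F hF => ?_⟩
    by_cases hd : d = 0
    · exfalso
      subst hd
      obtain ⟨x, hx0, -⟩ := hα ∅ (by simp)
      exact hx0 (funext fun i => i.elim0)
    · have hinf : {z : Fin d → ℤ | z ≠ 0}.Infinite := by
        apply Set.infinite_of_injective_forall_mem
          (f := fun k : ℕ => (fun _ => (k : ℤ) + 1 : Fin d → ℤ))
        · intro a b hab
          have h2 := congrFun hab ⟨0, Nat.pos_of_ne_zero hd⟩
          simp only at h2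
          omega
        · intro k
          simp only [Set.mem_setOf_eq, ne_eq]
          intro h
          have := congrFun h ⟨0, Nat.pos_of_ne_zero hd⟩
          simp at this
          omega
      exact PMaux.witness_infinite P A hinf hα0 hα F hF
  · rintro ⟨hα0, hα⟩
    refine ⟨hα0, fun F hF => ?_⟩
    obtain ⟨z, hz⟩ := (hα F hF).nonempty
    exact ⟨z, hz.1, hz.2⟩
end

section
/- Let ∗ be a proper multiplication on ℤ^d, T ∈ M_d(ℤ) with nonzero determinant, and suppose the conjugated multiplication x ∗_T y := T⁻¹(Tx ∗ Ty) also maps ℤ^d × ℤ^d into ℤ^d and has no zero divisors. Then for A ⊆ ℤ^d \ {0}, A is thick with respect to ∗_T if and only if TA is thick with respect to ∗. -/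
/-- Thickness in (ℤ^d\{0}) with respect to an arbitrary multiplication map. -/
def ThickF {d : ℕ} (mul : (Fin d → ℤ) → (Fin d → ℤ) → (Fin d → ℤ))
    (A : Set (Fin d → ℤ)) : Prop :=
  ∀ F : Finset (Fin d → ℤ), (∀ f ∈ F, f ≠ 0) →
    ∃ x : Fin d → ℤ, x ≠ 0 ∧ ∀ f ∈ F, mul f x ∈ A

lemma ProperMult.zsmul_left {d : ℕ} (P : ProperMult d) (n : ℤ) (x y : Fin d → ℤ) :
    P.mul (n • x) y = n • P.mul x y :=
  map_zsmul (AddMonoidHom.mk' (fun x => P.mul x y) (fun a b => P.add_left a b y)) n x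

lemma ProperMult.zsmul_right {d : ℕ} (P : ProperMult d) (n : ℤ) (x y : Fin d → ℤ) :
    P.mul x (n • y) = n • P.mul x y :=
  map_zsmul (AddMonoidHom.mk' (fun y => P.mul x y) (fun a b => P.add_right x a b)) n y

/-- If m' is the conjugated multiplication x ∗_T y = T⁻¹(Tx ∗ Ty) (with values in
ℤ^d and no zero divisors), then A is thick w.r.t. ∗_T iff TA is thick w.r.t. ∗. -/
theorem thick_conj_iff {d : ℕ} (P : ProperMult d) (T : Matrix (Fin d) (Fin d) ℤ)
    (hdet : T.det ≠ 0)
    (m' : (Fin d → ℤ) → (Fin d → ℤ) → (Fin d → ℤ))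
    (hm' : ∀ x y : Fin d → ℤ, T.mulVec (m' x y) = P.mul (T.mulVec x) (T.mulVec y))
    (hnz : ∀ x y : Fin d → ℤ, m' x y = 0 → x = 0 ∨ y = 0)
    (A : Set (Fin d → ℤ)) (hA : (0 : Fin d → ℤ) ∉ A) :
    ThickF m' A ↔ ThickF P.mul ((fun v => T.mulVec v) '' A) := by
  have Tadj : ∀ v : Fin d → ℤ, T.mulVec (T.adjugate.mulVec v) = T.det • v := by
    intro v
    rw [Matrix.mulVec_mulVec, Matrix.mul_adjugate, Matrix.smul_mulVec,
      Matrix.one_mulVec]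
  have Tinj0 : ∀ v : Fin d → ℤ, T.mulVec v = 0 → v = 0 := by
    intro v hv
    have h1 : T.adjugate.mulVec (T.mulVec v) = T.det • v := by
      rw [Matrix.mulVec_mulVec, Matrix.adjugate_mul, Matrix.smul_mulVec,
        Matrix.one_mulVec]
    rw [hv, Matrix.mulVec_zero] at h1
    rcases smul_eq_zero.mp h1.symm with h | h
    · exact absurd h hdet
    · exact h
  have Tinj : ∀ u v : Fin d → ℤ, T.mulVec u = T.mulVec v → u = v := by
    intro u v huv
    have := Tinj0 (u - v) (by rw [Matrix.mulVec_sub, huv, sub_self])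
    exact sub_eq_zero.mp this
  constructor
  · -- ThickF m' A → ThickF ∗ (TA)
    intro h F hF
    obtain ⟨a, ha0, ha⟩ := h (F.image fun f => T.adjugate.mulVec f) (by
      intro g hg
      simp only [Finset.mem_image] at hg
      obtain ⟨f, hf, rfl⟩ := hg
      intro h0
      apply hF f hf
      have := Tadj f
      rw [h0, Matrix.mulVec_zero] at this
      rcases smul_eq_zero.mp this.symm with h | h
      · exact absurd h hdet
      · exact h)
    refine ⟨T.mulVec (T.det • a), ?_, ?_⟩
    · intro h0
      rcases smul_eq_zero.mp (Tinj0 _ h0) with h | h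
      · exact absurd h hdet
      · exact ha0 h
    · intro f hf
      have key : P.mul f (T.mulVec (T.det • a)) = T.mulVec (m' (T.adjugate.mulVec f) a) := by
        rw [hm', Tadj, P.zsmul_left, Matrix.mulVec_smul, P.zsmul_right]
      refine ⟨m' (T.adjugate.mulVec f) a, ?_, key.symm⟩
      exact ha _ (Finset.mem_image_of_mem _ hf)
  · -- ThickF ∗ (TA) → ThickF m' A
    intro h F hF
    rcases F.eq_empty_or_nonempty with rfl | ⟨f₀, hf₀⟩
    · obtain ⟨x, hx, -⟩ := h ∅ (by simp)
      exact ⟨x, hx, by simp⟩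
    have hTne : ∀ f ∈ F, T.mulVec f ≠ 0 := by
      intro f hf h0
      exact hF f hf (Tinj0 _ h0)
    obtain ⟨x, hx0, hx⟩ := h
      (insert (T.mulVec f₀) (F.image fun f => P.mul (T.mulVec f) (T.mulVec f₀))) (by
        intro g hg
        rcases Finset.mem_insert.mp hg with rfl | hg
        · exact hTne f₀ hf₀
        · simp only [Finset.mem_image] at hg
          obtain ⟨f, hf, rfl⟩ := hg
          rw [← hm']
          intro h0
          rcases hnz _ _ (Tinj0 _ h0) with h1 | h1
          · exact hF f hf h1
          · exact hF f₀ hf₀ h1)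
    obtain ⟨a, haA, haT⟩ := hx _ (Finset.mem_insert_self _ _)
    refine ⟨a, fun h0 => hA (h0 ▸ haA), ?_⟩
    intro f hf
    obtain ⟨b, hbA, hbT⟩ := hx _ (Finset.mem_insert_of_mem (Finset.mem_image_of_mem _ hf))
    have haT' : T.mulVec a = P.mul (T.mulVec f₀) x := haT
    have hbT' : T.mulVec b = P.mul (P.mul (T.mulVec f) (T.mulVec f₀)) x := hbT
    have : T.mulVec (m' f a) = T.mulVec b := by
      rw [hm', haT', ← P.assoc, ← hbT']
    rw [Tinj _ _ this]
    exact hbA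
end

section
/- Let ∗ be a proper multiplication on ℤ^d with left representation ψ, and let T ∈ GL_d(ℚ) ∩ M_d(ℤ). If T ψ(x) T⁻¹ = ψ(Tx) for all x ∈ ℤ^d (i.e., T is an automorphism of the algebra ∗), then det T = ±1, i.e., T ∈ GL_d(ℤ). -/
/-- The left representation of a proper multiplication, viewed over ℚ. -/
def psiZ {d : ℕ} (P : ProperMult d) (x : Fin d → ℤ) : Matrix (Fin d) (Fin d) ℚ :=
  Matrix.of fun i j => ((P.mul x (Pi.single j 1)) i : ℚ)

namespace ProperMultAux

open Matrix

variable {d : ℕ} (P : ProperMult d)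

/-- The integer left representation. -/
def psiI (x : Fin d → ℤ) : Matrix (Fin d) (Fin d) ℤ :=
  Matrix.of fun i j => (P.mul x (Pi.single j 1)) i

lemma psiZ_eq_map (x : Fin d → ℤ) :
    psiZ P x = (psiI P x).map (Int.cast : ℤ → ℚ) := rfl

/-- Right multiplication as an additive hom. -/
def mulRightHom (x : Fin d → ℤ) : (Fin d → ℤ) →+ (Fin d → ℤ) :=
  AddMonoidHom.mk' (P.mul x) (P.add_right x)

/-- Left multiplication as an additive hom. -/
def mulLeftHom (z : Fin d → ℤ) : (Fin d → ℤ) →+ (Fin d → ℤ) :=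
  AddMonoidHom.mk' (fun x => P.mul x z) (fun a b => P.add_left a b z)

lemma vec_eq_sum (y : Fin d → ℤ) : y = ∑ j, (y j) • Pi.single j (1 : ℤ) := by
  funext i
  simp [Finset.sum_apply, Pi.single_apply]

lemma mul_expand_right (x y : Fin d → ℤ) :
    P.mul x y = ∑ j, y j • P.mul x (Pi.single j 1) := by
  calc P.mul x y = mulRightHom P x y := rfl
    _ = mulRightHom P x (∑ j, (y j) • Pi.single j (1 : ℤ)) := by rw [← vec_eq_sum]
    _ = ∑ j, (y j) • mulRightHom P x (Pi.single j 1) := by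
        rw [map_sum]
        exact Finset.sum_congr rfl fun j _ => map_zsmul _ _ _
    _ = _ := rfl

lemma mul_expand_left (x y : Fin d → ℤ) :
    P.mul x y = ∑ i, x i • P.mul (Pi.single i 1) y := by
  calc P.mul x y = mulLeftHom P y x := rfl
    _ = mulLeftHom P y (∑ i, (x i) • Pi.single i (1 : ℤ)) := by rw [← vec_eq_sum]
    _ = ∑ i, (x i) • mulLeftHom P y (Pi.single i 1) := by
        rw [map_sum]
        exact Finset.sum_congr rfl fun i _ => map_zsmul _ _ _
    _ = _ := rfl

lemma psiI_mulVec (x y : Fin d → ℤ) : (psiI P x) *ᵥ y = P.mul x y := by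
  funext i
  rw [mul_expand_right P x y]
  simp [Matrix.mulVec, dotProduct, psiI, Finset.sum_apply, mul_comm]

lemma psiI_mul (x y : Fin d → ℤ) : psiI P (P.mul x y) = psiI P x * psiI P y := by
  ext i j
  have h1 : (psiI P (P.mul x y)) *ᵥ Pi.single j 1
      = (psiI P x * psiI P y) *ᵥ Pi.single j 1 := by
    rw [psiI_mulVec, ← Matrix.mulVec_mulVec, psiI_mulVec, psiI_mulVec, P.assoc]
  have := congrFun h1 i
  simpa using this

lemma psiI_det_ne_zero (x : Fin d → ℤ) (hx : x ≠ 0) : (psiI P x).det ≠ 0 := by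
  intro h
  obtain ⟨v, hv0, hveq⟩ := Matrix.exists_mulVec_eq_zero_iff.mpr h
  rw [psiI_mulVec] at hveq
  rcases P.no_zero_divisors x v hveq with h' | h'
  · exact hx h'
  · exact hv0 h'

/-- The rational left representation, as a linear map. -/
noncomputable def Psi : (Fin d → ℚ) →ₗ[ℚ] Matrix (Fin d) (Fin d) ℚ :=
  ∑ i : Fin d, (LinearMap.proj i : (Fin d → ℚ) →ₗ[ℚ] ℚ).smulRight
    (psiZ P (Pi.single i 1))

lemma Psi_apply (v : Fin d → ℚ) :
    Psi P v = ∑ i, v i • psiZ P (Pi.single i 1) := by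
  simp [Psi]

lemma Psi_cast (x : Fin d → ℤ) :
    Psi P (fun i => (x i : ℚ)) = psiZ P x := by
  rw [Psi_apply]
  ext a b
  simp only [Matrix.sum_apply, Pi.smul_apply, smul_eq_mul, psiZ, Matrix.of_apply]
  rw [mul_expand_left P x (Pi.single b 1)]
  push_cast [Finset.sum_apply, Pi.smul_apply, smul_eq_mul]
  rfl

lemma exists_int_rep (v : Fin d → ℚ) :
    ∃ (q : ℚ) (x : Fin d → ℤ), q ≠ 0 ∧ q • v = fun i => (x i : ℚ) := by
  set n : ℤ := ∏ i, ((v i).den : ℤ) with hn_def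
  have hn : (n : ℚ) ≠ 0 := by
    rw [Int.cast_ne_zero, hn_def]
    exact Finset.prod_ne_zero_iff.mpr fun i _ => Int.natCast_ne_zero.mpr (v i).den_nz
  refine ⟨(n : ℚ), fun i => (v i).num * (n / ((v i).den : ℤ)), hn, ?_⟩
  funext i
  have hdvd : ((v i).den : ℤ) ∣ n := Finset.dvd_prod_of_mem _ (Finset.mem_univ i)
  have hden : ((v i).den : ℚ) ≠ 0 := Nat.cast_ne_zero.mpr (v i).den_nz
  have hmul : ((v i).den : ℤ) * (n / ((v i).den : ℤ)) = n := Int.mul_ediv_cancel' hdvd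
  have h2 : (n : ℚ) = ((v i).den : ℚ) * ((n / ((v i).den : ℤ) : ℤ) : ℚ) := by
    exact_mod_cast hmul.symm
  have hvd : ((v i).num : ℚ) = v i * ((v i).den : ℚ) :=
    (div_eq_iff hden).mp (Rat.num_div_den (v i))
  rw [Pi.smul_apply, smul_eq_mul]
  push_cast
  rw [hvd, mul_assoc,
    show ((v i).den : ℚ) * ((n / ((v i).den : ℤ) : ℤ) : ℚ) = (n : ℚ) by exact_mod_cast hmul]
  ring

lemma psiZ_mul (x y : Fin d → ℤ) :
    psiZ P (P.mul x y) = psiZ P x * psiZ P y := by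
  have : ((psiI P x * psiI P y).map (Int.cast : ℤ → ℚ))
      = (psiI P x).map (Int.cast : ℤ → ℚ) * (psiI P y).map (Int.cast : ℤ → ℚ) :=
    Matrix.map_mul (f := Int.castRingHom ℚ)
  rw [psiZ_eq_map, psiZ_eq_map, psiZ_eq_map, psiI_mul, this]

lemma map_mulVec_cast (A : Matrix (Fin d) (Fin d) ℤ) (y : Fin d → ℤ) :
    (A.map (Int.cast : ℤ → ℚ)) *ᵥ (fun i => (y i : ℚ)) = fun i => ((A *ᵥ y) i : ℚ) := by
  funext i
  simp only [Matrix.mulVec, dotProduct, Matrix.map_apply]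
  push_cast
  rfl

lemma Psi_det_ne_zero (v : Fin d → ℚ) (hv : v ≠ 0) : (Psi P v).det ≠ 0 := by
  obtain ⟨q, x, hq, hqv⟩ := exists_int_rep v
  have hPsi : q • Psi P v = psiZ P x := by rw [← _root_.map_smul, hqv, Psi_cast]
  have hx : x ≠ 0 := by
    intro h0
    apply hv
    have hv0 : q • v = 0 := by
      rw [hqv, h0]; funext i; simp
    exact (smul_eq_zero.mp hv0).resolve_left hq
  have hdetx : (psiZ P x).det ≠ 0 := by
    rw [psiZ_eq_map,
      show (psiI P x).map (Int.cast : ℤ → ℚ) = (Int.castRingHom ℚ).mapMatrix (psiI P x) from rfl,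
      ← RingHom.map_det]
    simp only [eq_intCast, ne_eq, Int.cast_eq_zero]
    exact psiI_det_ne_zero P x hx
  intro h
  apply hdetx
  rw [← hPsi, Matrix.det_smul, h, mul_zero]

lemma Psi_mul (u w : Fin d → ℚ) :
    Psi P u * Psi P w = Psi P ((Psi P u) *ᵥ w) := by
  obtain ⟨q, x, hq, hqu⟩ := exists_int_rep u
  obtain ⟨r, y, hr, hrw⟩ := exists_int_rep w
  have hPu : q • Psi P u = psiZ P x := by rw [← _root_.map_smul, hqu, Psi_cast]
  have hPw : r • Psi P w = psiZ P y := by rw [← _root_.map_smul, hrw, Psi_cast]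
  have key : (q * r) • (Psi P u * Psi P w) = (q * r) • Psi P (Psi P u *ᵥ w) := by
    calc (q * r) • (Psi P u * Psi P w) = (q • Psi P u) * (r • Psi P w) := by
          rw [smul_mul_assoc, mul_smul_comm, smul_smul]
      _ = psiZ P x * psiZ P y := by rw [hPu, hPw]
      _ = psiZ P (P.mul x y) := (psiZ_mul P x y).symm
      _ = Psi P (fun i => ((P.mul x y) i : ℚ)) := (Psi_cast P _).symm
      _ = Psi P ((psiZ P x) *ᵥ (fun i => (y i : ℚ))) := by
          rw [psiZ_eq_map, map_mulVec_cast, psiI_mulVec]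
      _ = Psi P ((q • Psi P u) *ᵥ (r • w)) := by rw [hPu, hrw]
      _ = (q * r) • Psi P (Psi P u *ᵥ w) := by
          rw [Matrix.smul_mulVec, Matrix.mulVec_smul, _root_.map_smul,
            _root_.map_smul, smul_smul]
  exact smul_right_injective _ (mul_ne_zero hq hr) key

end ProperMultAux

open Matrix ProperMultAux in
/-- If T ∈ M_d(ℤ) with nonzero determinant is an automorphism of the algebra,
i.e. T ψ(x) T⁻¹ = ψ(Tx) for all x ∈ ℤ^d, then det T = ±1, i.e. T ∈ GL_d(ℤ). -/
theorem det_eq_pm_one_of_algebra_automorphism {d : ℕ} (P : ProperMult d)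
    (T : Matrix (Fin d) (Fin d) ℤ) (hdet : T.det ≠ 0)
    (hconj : ∀ x : Fin d → ℤ,
      (T.map (Int.cast : ℤ → ℚ)) * psiZ P x = psiZ P (T.mulVec x) * (T.map (Int.cast : ℤ → ℚ))) :
    T.det = 1 ∨ T.det = -1 := by
  set T' : Matrix (Fin d) (Fin d) ℚ := T.map (Int.cast : ℤ → ℚ) with hT'
  have hdetT' : T'.det = (T.det : ℚ) := by
    rw [hT', show T.map (Int.cast : ℤ → ℚ) = (Int.castRingHom ℚ).mapMatrix T from rfl,
      ← RingHom.map_det]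
    simp
  have hTu : IsUnit T'.det := by
    rw [isUnit_iff_ne_zero, hdetT', Int.cast_ne_zero]; exact hdet
  -- the Gram matrix of the trace form
  set G : Matrix (Fin d) (Fin d) ℚ :=
    Matrix.of fun i j => ((psiZ P (Pi.single i 1)) * (psiZ P (Pi.single j 1))).trace with hG
  -- trace invariance
  have h1 : ∀ x y : Fin d → ℤ,
      ((psiZ P (T *ᵥ x)) * (psiZ P (T *ᵥ y))).trace = ((psiZ P x) * (psiZ P y)).trace := by
    intro x y
    have e1 : psiZ P (T *ᵥ x) * psiZ P (T *ᵥ y) * T'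
        = T' * (psiZ P x * psiZ P y) := by
      rw [mul_assoc, ← hconj y, ← mul_assoc, ← hconj x, mul_assoc]
    have e2 : psiZ P (T *ᵥ x) * psiZ P (T *ᵥ y)
        = T' * (psiZ P x * psiZ P y) * T'⁻¹ := by
      rw [← e1, Matrix.mul_nonsing_inv_cancel_right _ _ hTu]
    rw [e2, Matrix.trace_mul_cycle, ← mul_assoc, Matrix.nonsing_inv_mul _ hTu, one_mul]
  -- expansion of psiZ (T *ᵥ single i 1)
  have hexp : ∀ i, psiZ P (T *ᵥ Pi.single i 1)
      = ∑ k, ((T k i : ℚ)) • psiZ P (Pi.single k 1) := by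
    intro i
    rw [← Psi_cast P (T *ᵥ Pi.single i 1), Psi_apply]
    apply Finset.sum_congr rfl
    intro k _
    congr 1
    simp [Matrix.mulVec_single]
  -- invariance of the Gram matrix
  have hGinv : T'.transpose * G * T' = G := by
    ext i j
    have key : ((psiZ P (T *ᵥ Pi.single i 1)) * (psiZ P (T *ᵥ Pi.single j 1))).trace
        = ∑ k, ∑ l, (T k i : ℚ) * (T l j : ℚ)
            * ((psiZ P (Pi.single k 1)) * (psiZ P (Pi.single l 1))).trace := by
      rw [hexp i, hexp j, Finset.sum_mul_sum]
      rw [Matrix.trace_sum]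
      apply Finset.sum_congr rfl
      intro k _
      rw [Matrix.trace_sum]
      apply Finset.sum_congr rfl
      intro l _
      rw [smul_mul_assoc, mul_smul_comm, smul_smul, Matrix.trace_smul, smul_eq_mul]
    have hg := h1 (Pi.single i 1) (Pi.single j 1)
    rw [key] at hg
    calc (T'.transpose * G * T') i j
        = ∑ l, (∑ k, T'.transpose i k * G k l) * T' l j := by
          simp [Matrix.mul_apply]
      _ = ∑ l, ∑ k, (T k i : ℚ) * (T l j : ℚ) * G k l := by
          apply Finset.sum_congr rfl
          intro l _
          rw [Finset.sum_mul]
          apply Finset.sum_congr rfl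
          intro k _
          simp only [Matrix.transpose_apply, hT', Matrix.map_apply]
          ring
      _ = ∑ k, ∑ l, (T k i : ℚ) * (T l j : ℚ) * G k l := Finset.sum_comm
      _ = G i j := by simp only [hG, Matrix.of_apply]; exact hg
  -- nondegeneracy of the Gram matrix
  have hdG : G.det ≠ 0 := by
    intro hdG0
    obtain ⟨c, hc0, hGc⟩ := Matrix.exists_mulVec_eq_zero_iff.mpr hdG0
    -- trace pairing vanishes against Psi c
    have htr1 : ∀ i, ((psiZ P (Pi.single i 1)) * Psi P c).trace = 0 := by
      intro i
      have := congrFun hGc i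
      rw [Psi_apply, Finset.mul_sum, Matrix.trace_sum]
      simp only [mul_smul_comm, Matrix.trace_smul, smul_eq_mul]
      calc ∑ j, c j * ((psiZ P (Pi.single i 1)) * (psiZ P (Pi.single j 1))).trace
          = ∑ j, G i j * c j := by
            apply Finset.sum_congr rfl; intro j _; rw [hG]; simp [mul_comm]
        _ = 0 := this
    have htr0 : ∀ v : Fin d → ℚ, (Psi P v * Psi P c).trace = 0 := by
      intro v
      rw [Psi_apply P v, Finset.sum_mul, Matrix.trace_sum]
      simp only [smul_mul_assoc, Matrix.trace_smul, smul_eq_mul]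
      rw [Finset.sum_eq_zero]
      intro i _
      rw [htr1 i, mul_zero]
    set M : Matrix (Fin d) (Fin d) ℚ := Psi P c with hM
    have hMdet : IsUnit M.det := isUnit_iff_ne_zero.mpr (Psi_det_ne_zero P c hc0)
    set V : Submodule ℚ (Matrix (Fin d) (Fin d) ℚ) := LinearMap.range (Psi P) with hV
    have hcl : ∀ A ∈ V, A * M ∈ V := by
      rintro A ⟨u, rfl⟩
      exact ⟨Psi P u *ᵥ c, (Psi_mul P u c).symm⟩
    let f : V →ₗ[ℚ] V :=
      LinearMap.codRestrict V ((LinearMap.mulRight ℚ M).comp V.subtype)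
        (fun a => hcl a.1 a.2)
    have hinj : Function.Injective f := by
      intro a b hab
      have hab' : a.1 * M = b.1 * M := congrArg Subtype.val hab
      have : a.1 = b.1 := by
        calc a.1 = a.1 * M * M⁻¹ := (Matrix.mul_nonsing_inv_cancel_right _ _ hMdet).symm
          _ = b.1 * M * M⁻¹ := by rw [hab']
          _ = b.1 := Matrix.mul_nonsing_inv_cancel_right _ _ hMdet
      exact Subtype.ext this
    have hsurj : Function.Surjective f := LinearMap.injective_iff_surjective.mp hinj
    have hMV : M ∈ V := ⟨c, rfl⟩
    obtain ⟨E, hE⟩ := hsurj ⟨M, hMV⟩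
    have hE' : E.1 * M = M := congrArg Subtype.val hE
    have hE1 : E.1 = 1 := by
      calc E.1 = E.1 * M * M⁻¹ := (Matrix.mul_nonsing_inv_cancel_right _ _ hMdet).symm
        _ = M * M⁻¹ := by rw [hE']
        _ = 1 := Matrix.mul_nonsing_inv _ hMdet
    have h1V : (1 : Matrix (Fin d) (Fin d) ℚ) ∈ V := hE1 ▸ E.2
    obtain ⟨F, hF⟩ := hsurj ⟨1, h1V⟩
    have hF' : F.1 * M = 1 := congrArg Subtype.val hF
    obtain ⟨v, hv⟩ := F.2
    have htr := htr0 v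
    rw [hv, hF', Matrix.trace_one] at htr
    -- d ≠ 0 since c ≠ 0
    obtain ⟨i, -⟩ := Function.ne_iff.mp hc0
    have : (Fintype.card (Fin d) : ℚ) ≠ 0 := by
      simp only [Fintype.card_fin, Nat.cast_ne_zero]
      exact (Fin.pos i).ne'
    exact this htr
  -- conclude
  have hdet2 : ((T.det : ℚ)) ^ 2 * G.det = G.det := by
    calc ((T.det : ℚ)) ^ 2 * G.det = T'.transpose.det * G.det * T'.det := by
          rw [Matrix.det_transpose, hdetT']; ring
      _ = (T'.transpose * G * T').det := by rw [Matrix.det_mul, Matrix.det_mul]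
      _ = G.det := by rw [hGinv]
  have hsq : ((T.det : ℚ)) ^ 2 = 1 := by
    have := mul_right_cancel₀ hdG (hdet2.trans (one_mul G.det).symm)
    exact this
  have hsq' : (T.det : ℚ) * (T.det : ℚ) = 1 := by rw [← sq]; exact hsq
  rcases mul_self_eq_one_iff.mp hsq' with h | h
  · left; exact_mod_cast h
  · right; exact_mod_cast h
end
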